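/- arXiv:1903.03926 — 2 statements merged into one kernel-verified Lean document; each statement's English description precedes it below -/
import Mathlib

section
/- Let A be an abelian category and let 0 → τM →^j E →^π M → 0 be an almost split (Auslander–Reiten) exact sequence in A. Then the sequence 0 → (τM, 0, 0) →^{(j,0)} (E, π, M) →^{(π, 1_M)} (M, 1_M, M) → 0 is an almost split sequence in the arrow category of A. -/
open CategoryTheory CategoryTheory.Limits ZeroObject

/-! Both ends of the sequence are degenerate arrows: `(M, 1_M, M)` is an isomorphism and
`(τM, 0, 0)` has zero target. Hence a square into `(M, 1_M, M)` (out of `(τM, 0, 0)`) is split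
exactly when its left component is, and it factors through `(π, 1_M)` (through `(j, 0)`) exactly
when its left component factors through `π` (through `j`); for `(j, 0)` the right component of
the factorization is induced on the cokernel `π` of `j`. So the almost split properties of
`0 → τM → E → M → 0` transfer to the arrow category. -/

section

variable {A : Type*} [Category A] [Abelian A]

/-- The morphism `(j, 0) : (τM, 0, 0) ⟶ (E, π, M)` in the arrow category. -/
noncomputable def arrowU {T E M : A} (j : T ⟶ E) (π : E ⟶ M) (w : j ≫ π = 0) :
    Arrow.mk (0 : T ⟶ (0 : A)) ⟶ Arrow.mk π :=
  Arrow.homMk (u := j) (v := (0 : (0 : A) ⟶ M)) (by simp [w])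

/-- The morphism `(π, 1_M) : (E, π, M) ⟶ (M, 1_M, M)` in the arrow category. -/
noncomputable def arrowP {E M : A} (π : E ⟶ M) : Arrow.mk π ⟶ Arrow.mk (𝟙 M) :=
  Arrow.homMk (u := π) (v := 𝟙 M) (by simp)

namespace CategoryTheory.Arrow

variable {C : Type*} [Category C]

lemma mono_of_mono_left_of_mono_right {f g : Arrow C} (sq : f ⟶ g) [Mono sq.left]
    [Mono sq.right] : Mono sq where
  right_cancellation φ ψ h := by
    ext
    · exact (cancel_mono sq.left).1 (by simpa using congrArg CommaMorphism.left h)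
    · exact (cancel_mono sq.right).1 (by simpa using congrArg CommaMorphism.right h)

lemma epi_of_epi_left_of_epi_right {f g : Arrow C} (sq : f ⟶ g) [Epi sq.left]
    [Epi sq.right] : Epi sq where
  left_cancellation φ ψ h := by
    ext
    · exact (cancel_epi sq.left).1 (by simpa using congrArg CommaMorphism.left h)
    · exact (cancel_epi sq.right).1 (by simpa using congrArg CommaMorphism.right h)

/-- A section `s` of `h.left` extends to the section `(s, g.hom⁻¹ ≫ s ≫ W.hom)` of `h`. -/
lemma isSplitEpi_iff_isSplitEpi_left {W g : Arrow C} [IsIso g.hom] (h : W ⟶ g) :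
    IsSplitEpi h ↔ IsSplitEpi h.left := by
  refine ⟨fun _ => inferInstanceAs (IsSplitEpi (leftFunc.map h)), fun ⟨⟨s, hs⟩⟩ => ?_⟩
  refine ⟨⟨homMk s (inv g.hom ≫ s ≫ W.hom) (by simp), ?_⟩⟩
  ext
  · simpa using hs
  · simp only [homMk_right, comp_right, id_right, Category.assoc, ← w h,
      reassoc_of% hs, IsIso.inv_hom_id]

lemma isSplitMono_iff_isSplitMono_left {f W : Arrow C} (hf : IsZero f.right) (h : f ⟶ W) :
    IsSplitMono h ↔ IsSplitMono h.left := by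
  refine ⟨fun _ => inferInstanceAs (IsSplitMono (leftFunc.map h)), fun ⟨⟨r, hr⟩⟩ => ?_⟩
  refine ⟨⟨homMk r (hf.from_ W.right) (hf.eq_of_tgt _ _), ?_⟩⟩
  ext
  · simpa using hr
  · exact hf.eq_of_src _ _

end CategoryTheory.Arrow

lemma exists_comp_arrowP_eq_iff {C : Type*} [Category C] {E M : C} (π : E ⟶ M) {W : Arrow C}
    (h : W ⟶ Arrow.mk (𝟙 M)) :
    (∃ t : W ⟶ Arrow.mk π, t ≫ arrowP π = h) ↔ ∃ t : W.left ⟶ E, t ≫ π = h.left := by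
  constructor
  · rintro ⟨t, rfl⟩
    exact ⟨t.left, rfl⟩
  · rintro ⟨t, ht⟩
    refine ⟨Arrow.homMk t h.right (by simpa [ht] using h.w), ?_⟩
    ext
    · exact ht
    · simp [arrowP]

/-- The right component of the factorization is induced by `t ≫ W.hom` on the cokernel `π`. -/
lemma exists_arrowU_comp_eq_iff {T E M : A} (j : T ⟶ E) (π : E ⟶ M) (w : j ≫ π = 0)
    (hπ : IsColimit (CokernelCofork.ofπ π w)) {W : Arrow A}
    (h : Arrow.mk (0 : T ⟶ (0 : A)) ⟶ W) :
    (∃ t : Arrow.mk π ⟶ W, arrowU j π w ≫ t = h) ↔ ∃ t : E ⟶ W.left, j ≫ t = h.left := by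
  constructor
  · rintro ⟨t, rfl⟩
    exact ⟨t.left, rfl⟩
  · rintro ⟨t, ht⟩
    have hz : j ≫ t ≫ W.hom = 0 := by simp [reassoc_of% ht]
    obtain ⟨t', ht'⟩ := CokernelCofork.IsColimit.desc' hπ (t ≫ W.hom) hz
    refine ⟨Arrow.homMk t t' ht'.symm, ?_⟩
    ext
    · exact ht
    · exact (isZero_zero A).eq_of_src _ _

/-- If `0 → τM →ʲ E →^π M → 0` is an almost split exact sequence in the
abelian category `A`, then `0 → (τM,0,0) →⁽ʲ'⁰⁾ (E,π,M) →⁽π,1⁾ (M,1,M) → 0` is an almost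
split sequence in the arrow category of `A` (exactness being componentwise). -/
theorem almost_split_sequence_in_arrow_category_ending_at_identity
    {T E M : A} (j : T ⟶ E) (π : E ⟶ M) (w : j ≫ π = 0)
    (hses : (ShortComplex.mk j π w).ShortExact)
    (hnonsplit : ¬ IsSplitEpi π)
    (hras : ∀ (W : A) (h : W ⟶ M), ¬ IsSplitEpi h → ∃ t : W ⟶ E, t ≫ π = h)
    (hlas : ∀ (W : A) (h : T ⟶ W), ¬ IsSplitMono h → ∃ t : E ⟶ W, j ≫ t = h) :
    Mono (arrowU j π w) ∧ Epi (arrowP π) ∧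
    -- exactness of the sequence in the arrow category, i.e. componentwise exactness:
    (ShortComplex.mk j π w).ShortExact ∧
    (ShortComplex.mk (0 : (0 : A) ⟶ M) (𝟙 M) (by simp)).ShortExact ∧
    -- the sequence does not split:
    ¬ IsSplitEpi (arrowP π) ∧
    -- `(π, 1_M)` is right almost split:
    (∀ (W : Arrow A) (h : W ⟶ Arrow.mk (𝟙 M)), ¬ IsSplitEpi h →
      ∃ t : W ⟶ Arrow.mk π, t ≫ arrowP π = h) ∧
    -- `(j, 0)` is left almost split:
    (∀ (W : Arrow A) (h : Arrow.mk (0 : T ⟶ (0 : A)) ⟶ W), ¬ IsSplitMono h →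
      ∃ t : Arrow.mk π ⟶ W, arrowU j π w ≫ t = h) := by
  have : Mono (arrowU j π w).left := hses.mono_f
  have : Epi (arrowP π).left := hses.epi_g
  have : Epi (arrowP π).right := inferInstanceAs (Epi (𝟙 M))
  have : IsIso (Arrow.mk (𝟙 M)).hom := inferInstanceAs (IsIso (𝟙 M))
  refine ⟨Arrow.mono_of_mono_left_of_mono_right _, Arrow.epi_of_epi_left_of_epi_right _, hses,
    .mk' ((ShortComplex.exact_iff_mono _ rfl).2 inferInstance) inferInstance inferInstance,
    fun h => hnonsplit ((Arrow.isSplitEpi_iff_isSplitEpi_left _).1 h), ?_, ?_⟩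
  · intro W h hh
    exact (exists_comp_arrowP_eq_iff π h).2
      (hras _ _ (mt (Arrow.isSplitEpi_iff_isSplitEpi_left h).2 hh))
  · intro W h hh
    exact (exists_arrowU_comp_eq_iff j π w hses.gIsCokernel h).2
      (hlas _ _ (mt (Arrow.isSplitMono_iff_isSplitMono_left (isZero_zero A) h).2 hh))

end
end

section
/- Let A be an abelian category with enough projectives, M an object of A, and P₁ →^{d₁} P₀ →^{d₀} M → 0 a projective presentation with d₀ and the induced map P₁ → Ker(d₀) both projective covers (a minimal projective presentation). Then the commuting diagram with rows P₁ →^{d₁} P₀ →^{d₀} M → 0 and P₁ ⊕ P₀ →^{[d₁, 1]} P₀ → 0 → 0, with vertical maps the inclusion [1;0] : P₁ → P₁ ⊕ P₀, the identity of P₀, and the zero map M → 0, is a minimal projective presentation of the object (M, 0, 0) (i.e., the morphism M → 0) in the arrow category of A. -/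
/-!
Kernels, cokernels and epimorphisms in the arrow category are computed componentwise, and
`(P, 1, P)` and `(P, [1;0], P ⊕ Q)` are projective for projective `P`, `Q`. So exactness and
epimorphicity of the new presentation reduce to those of `P₁ → P₀ → M → 0`, together with the
facts that `P₀ → 0` is the cokernel of the split epimorphism `[d₁, 1]` and `1 : P₀ → P₀` the kernel
of `P₀ → 0`. For right minimality, an endomorphism `θ` of `(P₀, 1, P₀)` over `(d₀, 0)` has equal
components fixing `d₀`; an endomorphism of `(P₁, [1;0], P₁ ⊕ P₀)` over the kernel lift is block
lower-triangular, with `P₁`-entry fixing `P₁ → Ker d₀` and `P₀`-entry `y` fixing `d₀`, because the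
`P₀`-row `(x, y)` satisfies `x d₁ + y = 1` and `d₁ d₀ = 0`. Both entries are then invertible.
-/

open CategoryTheory CategoryTheory.Limits ZeroObject

section

variable {A : Type*} [Category A] [Abelian A]

/-- The zero morphism in the arrow category (componentwise zero). -/
def arrowZero (f g : Arrow A) : f ⟶ g := { left := 0, right := 0, w := by simp }

/-- Zero morphisms in the arrow category (componentwise zero). -/
instance : HasZeroMorphisms (Arrow A) where
  zero f g := ⟨arrowZero f g⟩
  comp_zero := by
    intro X Y f Z
    apply CommaMorphism.ext
    · show f.left ≫ (arrowZero Y Z).left = (arrowZero X Z).left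
      exact CategoryTheory.Limits.comp_zero
    · show f.right ≫ (arrowZero Y Z).right = (arrowZero X Z).right
      exact CategoryTheory.Limits.comp_zero
  zero_comp := by
    intro X Y Z f
    apply CommaMorphism.ext
    · show (arrowZero X Y).left ≫ f.left = (arrowZero X Z).left
      exact CategoryTheory.Limits.zero_comp
    · show (arrowZero X Y).right ≫ f.right = (arrowZero X Z).right
      exact CategoryTheory.Limits.zero_comp

/-- `p : P ⟶ M` is a projective cover: `P` is projective, `p` is an epimorphism and `p` is
right minimal. -/
def IsProjectiveCover {C : Type*} [Category C] {P M : C} (p : P ⟶ M) : Prop :=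
  Projective P ∧ Epi p ∧ ∀ θ : P ⟶ P, θ ≫ p = p → IsIso θ

variable {M P₁ P₀ : A} (d₁ : P₁ ⟶ P₀) (d₀ : P₀ ⟶ M) (w0 : d₁ ≫ d₀ = 0)

/-- The augmentation `(d₀, 0) : (P₀, 1, P₀) ⟶ (M, 0, 0)` in the arrow category. -/
noncomputable def arrowE₀ : Arrow.mk (𝟙 P₀) ⟶ Arrow.mk (0 : M ⟶ (0 : A)) :=
  Arrow.homMk (u := d₀) (v := (0 : P₀ ⟶ (0 : A))) (by simp)

/-- The map `(d₁, [d₁,1]) : (P₁, [1;0], P₁ ⊕ P₀) ⟶ (P₀, 1, P₀)` in the arrow category. -/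
noncomputable def arrowE₁ : Arrow.mk (biprod.inl : P₁ ⟶ P₁ ⊞ P₀) ⟶ Arrow.mk (𝟙 P₀) :=
  Arrow.homMk (u := d₁) (v := biprod.desc d₁ (𝟙 P₀)) (by simp)

/-- The inclusion of the (componentwise) kernel of `(d₀, 0)` into `(P₀, 1, P₀)`. -/
noncomputable def arrowKerι : Arrow.mk (kernel.ι d₀) ⟶ Arrow.mk (𝟙 P₀) :=
  Arrow.homMk (u := kernel.ι d₀) (v := 𝟙 P₀) (by simp)

/-- The induced map from `(P₁, [1;0], P₁ ⊕ P₀)` to the kernel of `(d₀, 0)`. -/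
noncomputable def arrowKerLift : Arrow.mk (biprod.inl : P₁ ⟶ P₁ ⊞ P₀) ⟶
    Arrow.mk (kernel.ι d₀) :=
  Arrow.homMk (u := kernel.lift d₀ d₁ w0) (v := biprod.desc d₁ (𝟙 P₀)) (by simp)

namespace CategoryTheory.Arrow

section General

variable {C : Type*} [Category C]

theorem epi_of_epi_left_of_epi_right_s18 {f g : Arrow C} (e : f ⟶ g) [Epi e.left] [Epi e.right] :
    Epi e where
  left_cancellation a b h := by
    ext
    · exact (cancel_epi e.left).mp (congrArg CommaMorphism.left h)
    · exact (cancel_epi e.right).mp (congrArg CommaMorphism.right h)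

-- Test against squares into `Z ⟶ ⊤_ C`, which carry an arbitrary map out of `g.left`.
instance epi_left_of_epi [HasTerminal C] {f g : Arrow C} (e : f ⟶ g) [Epi e] : Epi e.left where
  left_cancellation {Z} a b h := by
    let toTerminal (c : g.left ⟶ Z) : g ⟶ Arrow.mk (terminal.from Z) :=
      Arrow.homMk c (terminal.from _) (terminal.hom_ext _ _)
    have : toTerminal a = toTerminal b :=
      (cancel_epi e).mp (by ext; exacts [h, terminal.hom_ext _ _])
    exact congrArg CommaMorphism.left this

variable [HasTerminal C]

theorem projective_mk_id {P : C} (hP : Projective P) : Projective (Arrow.mk (𝟙 P)) where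
  factors {E X} f e _ := by
    obtain ⟨l, hl⟩ := hP.factors f.left e.left
    refine ⟨Arrow.homMk l (l ≫ E.hom) (by simp), ?_⟩
    ext
    · simpa using hl
    · simp only [Arrow.comp_right, Arrow.homMk_right]
      rw [Category.assoc, ← Arrow.w e, reassoc_of% hl]
      simp

theorem projective_mk_inl [Preadditive C] {P Q : C} [HasBinaryBiproduct P Q]
    (hP : Projective P) (hQ : Projective Q) :
    Projective (Arrow.mk (biprod.inl : P ⟶ P ⊞ Q)) where
  factors {E X} f e _ := by
    obtain ⟨l, hl⟩ := hP.factors f.left e.left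
    obtain ⟨r, hr⟩ := hQ.factors (biprod.inr ≫ f.right) e.right
    refine ⟨Arrow.homMk l (biprod.desc (l ≫ E.hom) r) (by simp), ?_⟩
    ext
    · simpa using hl
    · apply biprod.hom_ext'
      · simp only [Arrow.comp_right, Arrow.homMk_right]
        rw [biprod.inl_desc_assoc, Category.assoc, ← Arrow.w e, reassoc_of% hl]
        simp
      · simpa using hr

end General

section Abelian

variable {A : Type*} [Category A] [Abelian A] {f g h : Arrow A}

@[simp]
theorem zero_left : (0 : f ⟶ g).left = 0 := rfl

theorem left_comp_eq_zero {u : f ⟶ g} {v : g ⟶ h} (w : u ≫ v = 0) : u.left ≫ v.left = 0 :=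
  congrArg CommaMorphism.left w

theorem right_comp_eq_zero {u : f ⟶ g} {v : g ⟶ h} (w : u ≫ v = 0) : u.right ≫ v.right = 0 :=
  congrArg CommaMorphism.right w

def isColimitCokernelCoforkOfComponents {u : f ⟶ g} {e : g ⟶ h} (w : u ≫ e = 0)
    (hl : IsColimit (CokernelCofork.ofπ e.left (left_comp_eq_zero w)))
    (hr : IsColimit (CokernelCofork.ofπ e.right (right_comp_eq_zero w))) :
    IsColimit (CokernelCofork.ofπ e w) :=
  have : Epi e.left := epi_of_isColimit_cofork hl
  let descL {Z : Arrow A} (s : g ⟶ Z) (hs : u ≫ s = 0) :=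
    CokernelCofork.IsColimit.desc' hl s.left (left_comp_eq_zero hs)
  let descR {Z : Arrow A} (s : g ⟶ Z) (hs : u ≫ s = 0) :=
    CokernelCofork.IsColimit.desc' hr s.right (right_comp_eq_zero hs)
  CokernelCofork.IsColimit.ofπ _ _
    (fun s hs => Arrow.homMk (descL s hs).1 (descR s hs).1 (by
      have hL : e.left ≫ (descL s hs).1 = s.left := (descL s hs).2
      have hR : e.right ≫ (descR s hs).1 = s.right := (descR s hs).2
      rw [← cancel_epi e.left, reassoc_of% hL, Arrow.w_assoc e, hR, Arrow.w s]))
    (fun s hs => by ext; exacts [(descL s hs).2, (descR s hs).2])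
    (fun s hs m hm => by
      ext
      · exact Cofork.IsColimit.hom_ext hl
          ((congrArg CommaMorphism.left hm).trans (descL s hs).2.symm)
      · exact Cofork.IsColimit.hom_ext hr
          ((congrArg CommaMorphism.right hm).trans (descR s hs).2.symm))

def isLimitKernelForkOfComponents {i : f ⟶ g} {e : g ⟶ h} (w : i ≫ e = 0)
    (hl : IsLimit (KernelFork.ofι i.left (left_comp_eq_zero w)))
    (hr : IsLimit (KernelFork.ofι i.right (right_comp_eq_zero w))) :
    IsLimit (KernelFork.ofι i w) :=
  have : Mono i.right := mono_of_isLimit_fork hr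
  let liftL {Z : Arrow A} (s : Z ⟶ g) (hs : s ≫ e = 0) :=
    KernelFork.IsLimit.lift' hl s.left (left_comp_eq_zero hs)
  let liftR {Z : Arrow A} (s : Z ⟶ g) (hs : s ≫ e = 0) :=
    KernelFork.IsLimit.lift' hr s.right (right_comp_eq_zero hs)
  KernelFork.IsLimit.ofι _ _
    (fun s hs => Arrow.homMk (liftL s hs).1 (liftR s hs).1 (by
      have hL : (liftL s hs).1 ≫ i.left = s.left := (liftL s hs).2
      have hR : (liftR s hs).1 ≫ i.right = s.right := (liftR s hs).2
      rw [← cancel_mono i.right, Category.assoc, Category.assoc, hR, ← Arrow.w i,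
        reassoc_of% hL, Arrow.w s]))
    (fun s hs => by ext; exacts [(liftL s hs).2, (liftR s hs).2])
    (fun s hs m hm => by
      ext
      · exact Fork.IsLimit.hom_ext hl
          ((congrArg CommaMorphism.left hm).trans (liftL s hs).2.symm)
      · exact Fork.IsLimit.hom_ext hr
          ((congrArg CommaMorphism.right hm).trans (liftR s hs).2.symm))

end Abelian

end CategoryTheory.Arrow

theorem CategoryTheory.Biprod.isIso_of_inl_comp_eq {C : Type*} [Category C] [Preadditive C]
    [HasBinaryBiproducts C] {X₁ X₂ Y₁ Y₂ : C}
    (b : X₁ ⊞ X₂ ⟶ Y₁ ⊞ Y₂) (a : X₁ ≅ Y₁) (hb : biprod.inl ≫ b = a.hom ≫ biprod.inl)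
    [IsIso (biprod.inr ≫ b ≫ biprod.snd)] : IsIso b := by
  -- a block lower-triangular matrix with invertible diagonal is (unipotent) ≫ (diagonal)
  have : b = (Biprod.unipotentLower (biprod.inr ≫ b ≫ biprod.fst ≫ a.inv) ≪≫
      biprod.mapIso a (asIso (biprod.inr ≫ b ≫ biprod.snd))).hom := by
    ext <;> simp [Biprod.ofComponents, reassoc_of% hb]
  rw [this]
  infer_instance

instance CategoryTheory.Limits.isSplitEpi_biprod_desc_id {C : Type*} [Category C]
    [Preadditive C] [HasBinaryBiproducts C] {X Y : C} (f : X ⟶ Y) :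
    IsSplitEpi (biprod.desc f (𝟙 Y)) :=
  IsSplitEpi.mk' ⟨biprod.inr, by simp⟩

include w0 in
theorem arrowE₁_comp_arrowE₀ : arrowE₁ d₁ ≫ arrowE₀ d₀ = 0 := by
  ext
  · simp [arrowE₁, arrowE₀, w0]
  · exact (isZero_zero A).eq_of_tgt _ _

theorem arrowKerι_comp_arrowE₀ : arrowKerι d₀ ≫ arrowE₀ d₀ = 0 := by
  ext
  · simp [arrowKerι, arrowE₀]
  · exact (isZero_zero A).eq_of_tgt _ _

noncomputable def isColimitArrowE₀ [Epi d₀] (hlift : Epi (kernel.lift d₀ d₁ w0))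
    (we : arrowE₁ d₁ ≫ arrowE₀ d₀ = 0) : IsColimit (CokernelCofork.ofπ (arrowE₀ d₀) we) :=
  Arrow.isColimitCokernelCoforkOfComponents we
    ((ShortComplex.mk d₁ d₀ w0).exact_iff_epi_kernel_lift.mpr hlift).gIsCokernel
    (CokernelCofork.IsColimit.ofEpiOfIsZero _
      (inferInstanceAs (Epi (biprod.desc d₁ (𝟙 P₀)))) (isZero_zero A))

noncomputable def isLimitArrowKerι (wι : arrowKerι d₀ ≫ arrowE₀ d₀ = 0) :
    IsLimit (KernelFork.ofι (arrowKerι d₀) wι) :=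
  Arrow.isLimitKernelForkOfComponents wι (kernelIsKernel d₀) (KernelFork.IsLimit.ofId _ rfl)

theorem arrowE₀_isProjectiveCover (hd₀ : IsProjectiveCover d₀) :
    IsProjectiveCover (arrowE₀ d₀) := by
  obtain ⟨hP₀, hepi, hmin⟩ := hd₀
  refine ⟨Arrow.projective_mk_id hP₀, ?_, fun θ hθ => ?_⟩
  · have : Epi (arrowE₀ d₀).left := hepi
    have : Epi (arrowE₀ d₀).right := (isZero_zero A).epi _
    exact Arrow.epi_of_epi_left_of_epi_right_s18 _
  · have : IsIso θ.left := hmin θ.left (congrArg CommaMorphism.left hθ)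
    have hsquare : θ.left = θ.right := by simpa using Arrow.w θ
    have : IsIso θ.right := hsquare ▸ inferInstance
    exact Arrow.isIso_of_isIso_left_of_isIso_right θ

theorem arrowKerLift_isProjectiveCover (hd₀ : IsProjectiveCover d₀)
    (hker : IsProjectiveCover (kernel.lift d₀ d₁ w0)) :
    IsProjectiveCover (arrowKerLift d₁ d₀ w0) := by
  refine ⟨Arrow.projective_mk_inl hker.1 hd₀.1, ?_, fun θ hθ => ?_⟩
  · have : Epi (arrowKerLift d₁ d₀ w0).left := hker.2.1
    have : Epi (arrowKerLift d₁ d₀ w0).right := inferInstanceAs (Epi (biprod.desc d₁ (𝟙 P₀)))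
    exact Arrow.epi_of_epi_left_of_epi_right_s18 _
  · have : IsIso θ.left := hker.2.2 θ.left (congrArg CommaMorphism.left hθ)
    set x := biprod.inr ≫ θ.right ≫ biprod.fst
    set y := biprod.inr ≫ θ.right ≫ biprod.snd
    have hrow : x ≫ d₁ + y = 𝟙 P₀ := by
      have hb : θ.right ≫ biprod.desc d₁ (𝟙 P₀) = biprod.desc d₁ (𝟙 P₀) :=
        congrArg CommaMorphism.right hθ
      simpa [biprod.desc_eq, x, y] using congrArg (biprod.inr ≫ ·) hb
    have : IsIso y := hd₀.2.2 y (by simpa [w0] using congrArg (· ≫ d₀) hrow)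
    have : IsIso θ.right :=
      Biprod.isIso_of_inl_comp_eq θ.right (asIso θ.left) (Arrow.w θ).symm
    exact Arrow.isIso_of_isIso_left_of_isIso_right θ

theorem minimal_projective_presentation_in_arrow_category
    (hd₀ : IsProjectiveCover d₀)
    (hker : IsProjectiveCover (kernel.lift d₀ d₁ w0)) :
    ∃ (we : arrowE₁ d₁ ≫ arrowE₀ d₀ = 0) (wι : arrowKerι d₀ ≫ arrowE₀ d₀ = 0),
      Nonempty (IsColimit (CokernelCofork.ofπ (arrowE₀ d₀) we)) ∧
      Nonempty (IsLimit (KernelFork.ofι (arrowKerι d₀) wι)) ∧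
      IsProjectiveCover (arrowE₀ d₀) ∧
      IsProjectiveCover (arrowKerLift d₁ d₀ w0) :=
  have : Epi d₀ := hd₀.2.1
  ⟨arrowE₁_comp_arrowE₀ d₁ d₀ w0, arrowKerι_comp_arrowE₀ d₀,
    ⟨isColimitArrowE₀ d₁ d₀ w0 hker.2.1 _⟩, ⟨isLimitArrowKerι d₀ _⟩,
    arrowE₀_isProjectiveCover d₀ hd₀, arrowKerLift_isProjectiveCover d₁ d₀ w0 hd₀ hker⟩

end
end
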